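/- arXiv:2306.17804 — 9 statements merged into one kernel-verified Lean document; each statement's English description precedes it below -/
import Mathlib

section
/- Let G = (V,E) be a finite simple graph and let G_VCC be its transformed graph. For every subset C of the vertex set of G_VCC, C is a clique in G_VCC if and only if the union of the endpoints of the edges of G corresponding to the vertices in C is a clique in G. -/
open SimpleGraph

/-- The (partial) transformed graph `G'_VCC` of a graph `G` with respect to a set `E'` of
edges of `G`: one vertex per edge of `E'`, two distinct vertices adjacent iff the union of
the endpoints of their corresponding edges is a clique in `G`. -/
def SimpleGraph.transGraph {V : Type*} (G : SimpleGraph V) (E' : Set (Sym2 V)) :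
    SimpleGraph {e : Sym2 V // e ∈ E'} where
  Adj a b := a ≠ b ∧ G.IsClique ({x | x ∈ a.1} ∪ {x | x ∈ b.1})
  symm := by
    constructor
    intro a b h
    exact ⟨h.1.symm, by rw [Set.union_comm]; exact h.2⟩
  loopless := by
    constructor
    intro a h
    exact h.1 rfl

/-- The minimum cardinality of a vertex clique cover of `G`. -/
noncomputable def SimpleGraph.vccNumber {W : Type*} (G : SimpleGraph W) : ℕ :=
  sInf {n | ∃ 𝒞 : Set (Set W), 𝒞.Finite ∧ 𝒞.ncard = n ∧
    (∀ C ∈ 𝒞, G.IsClique C) ∧ ∀ w : W, ∃ C ∈ 𝒞, w ∈ C}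

/-- The minimum cardinality of a set of cliques of `G` covering every edge of `E'`. -/
noncomputable def SimpleGraph.eccNumberOn {W : Type*} (G : SimpleGraph W)
    (E' : Set (Sym2 W)) : ℕ :=
  sInf {n | ∃ 𝒞 : Set (Set W), 𝒞.Finite ∧ 𝒞.ncard = n ∧
    (∀ C ∈ 𝒞, G.IsClique C) ∧ ∀ e ∈ E', ∃ C ∈ 𝒞, ∀ x ∈ e, x ∈ C}

/-- The minimum cardinality of an edge clique cover of `G`. -/
noncomputable def SimpleGraph.eccNumber {W : Type*} (G : SimpleGraph W) : ℕ :=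
  G.eccNumberOn G.edgeSet

/-- `G` is `d`-degenerate: every nonempty (induced) subgraph has a vertex of degree at most
`d`. -/
def SimpleGraph.Degenerate {W : Type*} (G : SimpleGraph W) (d : ℕ) : Prop :=
  ∀ S : Set W, S.Nonempty → ∃ v ∈ S, {u ∈ S | G.Adj v u}.ncard ≤ d

/-- The degeneracy of `G`: the smallest `d` such that `G` is `d`-degenerate. -/
noncomputable def SimpleGraph.degeneracy {W : Type*} (G : SimpleGraph W) : ℕ :=
  sInf {d | G.Degenerate d}

theorem Set.pairwise_biUnion_of_pairwise_union {ι α : Type*} {r : α → α → Prop} {s : Set ι}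
    {f : ι → Set α} (h : ∀ i ∈ s, ∀ j ∈ s, (f i ∪ f j).Pairwise r) :
    (⋃ i ∈ s, f i).Pairwise r := by
  intro x hx y hy hxy
  obtain ⟨i, hi, hxi⟩ := Set.mem_iUnion₂.mp hx
  obtain ⟨j, hj, hyj⟩ := Set.mem_iUnion₂.mp hy
  exact h i hi j hj (Or.inl hxi) (Or.inr hyj) hxy

namespace SimpleGraph

variable {V : Type*} {G : SimpleGraph V}

theorem isClique_setOf_mem_of_mem_edgeSet {e : Sym2 V} (he : e ∈ G.edgeSet) :
    G.IsClique {x | x ∈ e} := by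
  induction e using Sym2.ind with
  | _ a b =>
    have hab : {x | x ∈ s(a, b)} = {a, b} := by ext; simp
    rw [hab, isClique_pair]
    exact fun _ => he

theorem transGraph_isClique_iff {E' : Set (Sym2 V)} (hE' : E' ⊆ G.edgeSet)
    {C : Set {e : Sym2 V // e ∈ E'}} :
    (G.transGraph E').IsClique C ↔ G.IsClique (⋃ e ∈ C, {x | x ∈ e.1}) := by
  constructor
  · refine fun hC => Set.pairwise_biUnion_of_pairwise_union fun e he f hf => ?_
    by_cases hef : e = f
    · rw [hef, Set.union_self]
      exact isClique_setOf_mem_of_mem_edgeSet (hE' f.2)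
    · exact (hC he hf hef).2
  · intro hC e he f hf hef
    refine ⟨hef, hC.subset ?_⟩
    rintro x (hxe | hxf)
    · exact Set.mem_biUnion he hxe
    · exact Set.mem_biUnion hf hxf

end SimpleGraph

theorem stmt_0_general {V : Type*} (G : SimpleGraph V)
    (C : Set {e : Sym2 V // e ∈ G.edgeSet}) :
    (G.transGraph G.edgeSet).IsClique C ↔ G.IsClique (⋃ e ∈ C, {x | x ∈ e.1}) :=
  transGraph_isClique_iff subset_rfl

/-- For every subset `C` of the vertex set of the transformed graph `G_VCC`,
`C` is a clique in `G_VCC` iff the union of the endpoints of the edges of `G`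
corresponding to the vertices in `C` is a clique in `G`. -/
theorem stmt_0 {V : Type*} [Fintype V] (G : SimpleGraph V)
    (C : Set {e : Sym2 V // e ∈ G.edgeSet}) :
    (G.transGraph G.edgeSet).IsClique C ↔ G.IsClique (⋃ e ∈ C, {x | x ∈ e.1}) :=
  stmt_0_general G C
end

section
/- For every finite simple graph G = (V,E), the minimum cardinality of a vertex clique cover of the transformed graph G_VCC equals the minimum cardinality of an edge clique cover of G, i.e., θ(G_VCC) = θ_E(G). -/
open SimpleGraph

/-! A clique `D` of the transformed graph gives the clique of `G` spanned by the endpoints of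
the edges in `D`, and a clique `C` of `G` gives the clique of the transformed graph formed by
the edges inside `C`. Both maps send covers to covers without increasing their number, so the
two minima coincide; if one kind of finite cover does not exist, neither does the other,
and both sides are the junk value `sInf ∅ = 0`. -/

theorem Nat.sInf_le_sInf_of_forall_exists_le {A B : Set ℕ} (h : ∀ n ∈ A, ∃ m ∈ B, m ≤ n)
    (hA : A.Nonempty) : sInf B ≤ sInf A :=
  let ⟨_, hm, hle⟩ := h _ (Nat.sInf_mem hA)
  (Nat.sInf_le hm).trans hle

theorem Nat.sInf_eq_sInf_of_forall_exists_le {A B : Set ℕ} (hAB : ∀ n ∈ A, ∃ m ∈ B, m ≤ n)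
    (hBA : ∀ m ∈ B, ∃ n ∈ A, n ≤ m) : sInf A = sInf B := by
  rcases A.eq_empty_or_nonempty with rfl | hA
  · have hB : B = ∅ := Set.eq_empty_of_forall_notMem fun m hm => by
      obtain ⟨_, hn, -⟩ := hBA m hm
      exact hn
    rw [hB]
  · have hB : B.Nonempty := let ⟨n, hn⟩ := hA; let ⟨m, hm, _⟩ := hAB n hn; ⟨m, hm⟩
    exact le_antisymm (Nat.sInf_le_sInf_of_forall_exists_le hBA hB)
      (Nat.sInf_le_sInf_of_forall_exists_le hAB hA)

namespace SimpleGraph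

variable {V : Type*} {G : SimpleGraph V} {E' : Set (Sym2 V)}

theorem IsClique.transGraph_setOf_forall_mem {C : Set V} (hC : G.IsClique C) :
    (G.transGraph E').IsClique {a | ∀ x ∈ a.1, x ∈ C} := by
  intro a ha b hb hab
  refine ⟨hab, hC.subset ?_⟩
  rintro x (hx | hx)
  exacts [ha x hx, hb x hx]

theorem IsClique.of_transGraph (hE' : E' ⊆ G.edgeSet) {D : Set {e : Sym2 V // e ∈ E'}}
    (hD : (G.transGraph E').IsClique D) : G.IsClique {x | ∃ a ∈ D, x ∈ a.1} := by
  rintro x ⟨a, ha, hxa⟩ y ⟨b, hb, hyb⟩ hxy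
  by_cases hab : a = b
  · subst hab
    have hxy_edge : a.1 = s(x, y) := (Sym2.mem_and_mem_iff hxy).mp ⟨hxa, hyb⟩
    exact G.mem_edgeSet.mp (hxy_edge ▸ hE' a.2)
  · exact (hD ha hb hab).2 (Set.mem_union_left _ hxa) (Set.mem_union_right _ hyb) hxy

theorem vccNumber_transGraph (hE' : E' ⊆ G.edgeSet) :
    (G.transGraph E').vccNumber = G.eccNumberOn E' := by
  apply Nat.sInf_eq_sInf_of_forall_exists_le
  · rintro _ ⟨𝒟, h𝒟, rfl, hclique, hcover⟩
    let endpoints : Set {e : Sym2 V // e ∈ E'} → Set V := fun D => {x | ∃ a ∈ D, x ∈ a.1}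
    refine ⟨_, ⟨endpoints '' 𝒟, h𝒟.image _, rfl, ?_, ?_⟩, Set.ncard_image_le h𝒟⟩
    · rintro _ ⟨D, hD, rfl⟩
      exact (hclique D hD).of_transGraph hE'
    · intro e he
      obtain ⟨D, hD, heD⟩ := hcover ⟨e, he⟩
      exact ⟨endpoints D, ⟨D, hD, rfl⟩, fun x hx => ⟨⟨e, he⟩, heD, hx⟩⟩
  · rintro _ ⟨𝒞, h𝒞, rfl, hclique, hcover⟩
    let edgesInside : Set V → Set {e : Sym2 V // e ∈ E'} := fun C => {a | ∀ x ∈ a.1, x ∈ C}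
    refine ⟨_, ⟨edgesInside '' 𝒞, h𝒞.image _, rfl, ?_, ?_⟩, Set.ncard_image_le h𝒞⟩
    · rintro _ ⟨C, hC, rfl⟩
      exact (hclique C hC).transGraph_setOf_forall_mem
    · intro a
      obtain ⟨C, hC, haC⟩ := hcover a.1 a.2
      exact ⟨edgesInside C, ⟨C, hC, rfl⟩, haC⟩

end SimpleGraph

theorem stmt_1_general {V : Type*} (G : SimpleGraph V) :
    (G.transGraph G.edgeSet).vccNumber = G.eccNumber :=
  vccNumber_transGraph subset_rfl

/-- The minimum cardinality of a vertex clique cover of the transformed graph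
`G_VCC` equals the minimum cardinality of an edge clique cover of `G`. -/
theorem stmt_1 {V : Type*} [Fintype V] (G : SimpleGraph V) :
    (G.transGraph G.edgeSet).vccNumber = G.eccNumber :=
  stmt_1_general G
end

section
/- Let G = (V,E) be a finite simple graph with m edges whose degeneracy is d. Then the number of 4-cliques (4-vertex cliques) of G is at most m · d(d−1)/2. -/
/-!
Order the vertices so that every vertex has at most `d` neighbours after it; `d`-degeneracy
provides such an order by repeatedly removing a vertex of minimum degree. A `(k + 2)`-clique is
determined by the edge joining its two lowest vertices together with its remaining `k` vertices,
which are later neighbours of the lowest one, so each edge accounts for at most `d.choose k` of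
these cliques.
-/

open SimpleGraph

open Finset

theorem Finset.exists_pair_lt_of_two_le_card {α : Type*} [LinearOrder α] {s : Finset α}
    (hs : 2 ≤ #s) : ∃ x ∈ s, ∃ y ∈ s, x ≠ y ∧ ∀ u ∈ s, u ≠ x → u ≠ y → x < u ∧ y < u := by
  have hs₁ : s.Nonempty := card_pos.mp (by omega)
  have hs₂ : (s.erase (s.min' hs₁)).Nonempty := by
    rw [← card_pos, card_erase_of_mem (s.min'_mem hs₁)]; omega
  have hy := (s.erase (s.min' hs₁)).min'_mem hs₂
  refine ⟨_, s.min'_mem hs₁, _, mem_of_mem_erase hy, (ne_of_mem_erase hy).symm,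
    fun u hu hux huy => ⟨min'_lt_of_mem_erase_min' _ _ (mem_erase.mpr ⟨hux, hu⟩), ?_⟩⟩
  exact min'_lt_of_mem_erase_min' _ _ (mem_erase.mpr ⟨huy, mem_erase.mpr ⟨hux, hu⟩⟩)

namespace SimpleGraph

variable {V : Type*} {G : SimpleGraph V} {d : ℕ}

theorem degenerate_degeneracy [Finite V] (G : SimpleGraph V) : G.Degenerate G.degeneracy :=
  Nat.sInf_mem (s := {d | G.Degenerate d})
    ⟨Nat.card V, fun _ ⟨v, hv⟩ => ⟨v, hv, Set.ncard_le_card _⟩⟩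

theorem Degenerate.exists_injective_forward_ncard_le [Finite V] (h : G.Degenerate d) :
    ∃ f : V → ℕ, Function.Injective f ∧ ∀ v, {u | G.Adj v u ∧ f v < f u}.ncard ≤ d := by
  classical
  suffices key : ∀ S : Finset V, ∃ f : V → ℕ, Function.Injective f ∧
      ∀ v ∈ S, {u | u ∈ S ∧ G.Adj v u ∧ f v < f u}.ncard ≤ d by
    cases nonempty_fintype V
    simpa using key univ
  intro S
  induction S using Finset.strongInduction with
  | _ S ih =>
    obtain rfl | hS := S.eq_empty_or_nonempty
    · obtain ⟨f, hf⟩ := Countable.exists_injective_nat V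
      exact ⟨f, hf, by simp⟩
    obtain ⟨v, hvS, hv⟩ := h S (coe_nonempty.mpr hS)
    obtain ⟨g, hg, hgS⟩ := ih (S.erase v) (erase_ssubset hvS)
    refine ⟨fun u => if u = v then 0 else g u + 1, fun a b hab => ?_, fun w hw => ?_⟩
    · simp only at hab
      split_ifs at hab with ha hb hb
      · exact ha.trans hb.symm
      · exact hg (by omega)
    by_cases hwv : w = v
    · subst hwv
      refine le_trans (Set.ncard_le_ncard ?_ (Set.toFinite _)) hv
      exact fun u hu => ⟨hu.1, hu.2.1⟩
    · refine le_trans (Set.ncard_le_ncard ?_ (Set.toFinite _))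
        (hgS w (mem_erase.mpr ⟨hwv, hw⟩))
      rintro u ⟨huS, hadj, hlt⟩
      by_cases huv : u = v
      · simp [huv] at hlt
      · simp only [hwv, huv, if_false] at hlt
        exact ⟨mem_erase.mpr ⟨huv, huS⟩, hadj, by omega⟩

section LinearOrder

variable [LinearOrder V] [Fintype V] [DecidableRel G.Adj]

/-- The `n`-cliques of `G` whose two lowest vertices are the ends of `e`. -/
def cliqueFinsetOver (n : ℕ) (e : Sym2 V) : Finset (Finset V) :=
  {q ∈ G.cliqueFinset n | ∀ x ∈ e, x ∈ q ∧ ∀ u ∈ q, u ∉ e → x < u}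

theorem cliqueFinset_subset_biUnion_cliqueFinsetOver (k : ℕ) :
    G.cliqueFinset (k + 2) ⊆ G.edgeFinset.biUnion (G.cliqueFinsetOver (k + 2)) := by
  intro q hq
  have hclq := mem_cliqueFinset_iff.mp hq
  obtain ⟨x, hx, y, hy, hxy, hlow⟩ :=
    exists_pair_lt_of_two_le_card (s := q) (by rw [hclq.card_eq]; omega)
  refine mem_biUnion.mpr ⟨s(x, y), mem_edgeFinset.mpr (hclq.isClique hx hy hxy), ?_⟩
  simp only [cliqueFinsetOver, mem_filter, Sym2.mem_iff, forall_eq_or_imp, forall_eq, not_or]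
  exact ⟨hq, ⟨hx, fun u hu h => (hlow u hu h.1 h.2).1⟩, ⟨hy, fun u hu h => (hlow u hu h.1 h.2).2⟩⟩

theorem card_cliqueFinsetOver_le {k : ℕ} {e : Sym2 V} (he : e ∈ G.edgeSet)
    (hfwd : ∀ v, #{u | G.Adj v u ∧ v < u} ≤ d) :
    #(G.cliqueFinsetOver (k + 2) e) ≤ d.choose k := by
  induction e using Sym2.ind with | h x y => ?_
  have hxy : x ≠ y := G.ne_of_adj he
  have hsub : G.cliqueFinsetOver (k + 2) s(x, y) ⊆
      (powersetCard k {u | G.Adj x u ∧ x < u}).image ({x, y} ∪ ·) := by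
    intro q hq
    simp only [cliqueFinsetOver, mem_filter, mem_cliqueFinset_iff, Sym2.mem_iff,
      forall_eq_or_imp, forall_eq, not_or] at hq
    obtain ⟨hclq, ⟨hx, hxlow⟩, hy, -⟩ := hq
    have hpair : {x, y} ⊆ q := insert_subset hx (singleton_subset_iff.mpr hy)
    refine mem_image.mpr ⟨q \ {x, y}, mem_powersetCard.mpr ⟨fun u hu => ?_, ?_⟩,
      union_sdiff_of_subset hpair⟩
    · obtain ⟨huq, hu⟩ := mem_sdiff.mp hu
      simp only [mem_insert, mem_singleton, not_or] at hu
      have hxu := hxlow u huq hu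
      exact mem_filter.mpr ⟨mem_univ u, hclq.isClique hx huq hxu.ne, hxu⟩
    · rw [card_sdiff_of_subset hpair, hclq.card_eq, card_pair hxy]; rfl
  calc #(G.cliqueFinsetOver (k + 2) s(x, y))
      ≤ #(powersetCard k {u | G.Adj x u ∧ x < u}) := (card_le_card hsub).trans card_image_le
    _ ≤ d.choose k := by rw [card_powersetCard]; exact Nat.choose_le_choose k (hfwd x)

end LinearOrder

theorem ncard_isNClique_le [LinearOrder V] [Finite V] (k : ℕ)
    (hfwd : ∀ v, {u | G.Adj v u ∧ v < u}.ncard ≤ d) :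
    {q : Finset V | G.IsNClique (k + 2) q}.ncard ≤ G.edgeSet.ncard * d.choose k := by
  classical
  cases nonempty_fintype V
  have hfwd' : ∀ v, #{u | G.Adj v u ∧ v < u} ≤ d := fun v => by
    simpa [← Set.ncard_coe_finset] using hfwd v
  change (G.cliqueSet (k + 2)).ncard ≤ _
  rw [← coe_cliqueFinset, Set.ncard_coe_finset, ← coe_edgeFinset, Set.ncard_coe_finset]
  calc #(G.cliqueFinset (k + 2))
      ≤ #(G.edgeFinset.biUnion (G.cliqueFinsetOver (k + 2))) :=
        card_le_card (cliqueFinset_subset_biUnion_cliqueFinsetOver k)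
    _ ≤ ∑ e ∈ G.edgeFinset, #(G.cliqueFinsetOver (k + 2) e) := card_biUnion_le
    _ ≤ ∑ _e ∈ G.edgeFinset, d.choose k :=
        sum_le_sum fun e he => card_cliqueFinsetOver_le (mem_edgeFinset.mp he) hfwd'
    _ = #G.edgeFinset * d.choose k := by rw [sum_const, smul_eq_mul]

end SimpleGraph

/-- If `G` has `m` edges and degeneracy `d`, then the number of
4-cliques (4-vertex cliques) of `G` is at most `m * d * (d - 1) / 2`. -/
theorem stmt_5 {V : Type*} [Fintype V] (G : SimpleGraph V) (d : ℕ)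
    (hd : G.degeneracy = d) :
    {q : Finset V | G.IsNClique 4 q}.ncard ≤ G.edgeSet.ncard * (d * (d - 1) / 2) := by
  obtain ⟨f, hf, hfwd⟩ := (hd ▸ G.degenerate_degeneracy).exists_injective_forward_ncard_le
  let : LinearOrder V := LinearOrder.lift' f hf
  rw [← Nat.choose_two_right]
  exact G.ncard_isNClique_le 2 hfwd
end

section
/- Let G = (V,E) be a finite simple graph, let T be the number of triangles of G and Q the number of 4-cliques of G. Then the number of edges of the transformed graph G_VCC is at most 3T + 3Q. -/
open SimpleGraph

/-!
Two distinct edges whose union is a clique span either a triangle, sharing one vertex, or a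
4-clique, being disjoint. Count ordered such pairs, i.e. darts of `G_VCC`: a triangle carries
`3 * 2` ordered pairs of distinct edges, and a 4-clique carries `6` ordered pairs of
complementary edges, one per choice of the first edge. Hence `2 * |E(G_VCC)| ≤ 6 T + 6 Q`.
-/

open Finset

namespace Finset

variable {α : Type*} [DecidableEq α]

theorem card_union_eq_three_or_eq_sdiff_of_card_eq_two {a b : Finset α} (ha : #a = 2)
    (hb : #b = 2) (hab : a ≠ b) : #(a ∪ b) = 3 ∨ (#(a ∪ b) = 4 ∧ b = (a ∪ b) \ a) := by
  have hinter : #(a ∩ b) ≤ 1 := by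
    by_contra! h
    have hsub : a ⊆ b := inter_eq_left.mp <| eq_of_subset_of_card_le inter_subset_left (by omega)
    exact hab (eq_of_subset_of_card_le hsub (by omega))
  have hsum := card_union_add_card_inter a b
  by_cases h : #(a ∩ b) = 1
  · left; omega
  · right
    have hdisj : Disjoint a b := disjoint_iff_inter_eq_empty.mpr (card_eq_zero.mp (by omega))
    exact ⟨by omega, (union_sdiff_cancel_left hdisj).symm⟩

end Finset

theorem Sym2.toFinset_injective {α : Type*} [DecidableEq α] :
    Function.Injective (Sym2.toFinset : Sym2 α → Finset α) := fun _ _ h =>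
  Sym2.ext fun x => by rw [← Sym2.mem_toFinset, h, Sym2.mem_toFinset]

namespace SimpleGraph

variable {V : Type*} [DecidableEq V] (G : SimpleGraph V)

def cliqueEdgePairs [Fintype V] [DecidableRel G.Adj] : Finset (Finset V × Finset V) :=
  ({t | G.IsNClique 3 t} : Finset (Finset V)).biUnion (fun t => (t.powersetCard 2).offDiag) ∪
    ({q | G.IsNClique 4 q} : Finset (Finset V)).biUnion
      (fun q => (q.powersetCard 2).image fun a => (a, q \ a))

theorem card_cliqueEdgePairs_le [Fintype V] [DecidableRel G.Adj] :
    #G.cliqueEdgePairs ≤ 6 * #{t | G.IsNClique 3 t} + 6 * #{q | G.IsNClique 4 q} := by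
  have htri : ∀ t ∈ ({t | G.IsNClique 3 t} : Finset (Finset V)),
      #(t.powersetCard 2).offDiag ≤ 6 := fun t ht => by
    rw [offDiag_card, card_powersetCard, (mem_filter.mp ht).2.card_eq]; rfl
  have hquad : ∀ q ∈ ({q | G.IsNClique 4 q} : Finset (Finset V)),
      #((q.powersetCard 2).image fun a => (a, q \ a)) ≤ 6 := fun q hq => by
    refine card_image_le.trans ?_
    rw [card_powersetCard, (mem_filter.mp hq).2.card_eq]; rfl
  calc #G.cliqueEdgePairs
      ≤ _ + _ := card_union_le _ _
    _ ≤ _ + _ := add_le_add (card_biUnion_le_card_mul _ _ _ htri)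
        (card_biUnion_le_card_mul _ _ _ hquad)
    _ = _ := by ring

variable {G}

theorem isClique_toFinset_union_of_transGraph_adj {E' : Set (Sym2 V)} {a b : E'}
    (h : (G.transGraph E').Adj a b) : G.IsClique (↑(a.1.toFinset ∪ b.1.toFinset) : Set V) := by
  have hcoe : ∀ e : Sym2 V, (↑e.toFinset : Set V) = {x | x ∈ e} := fun e => by ext; simp
  rw [coe_union, hcoe, hcoe]
  exact h.2

theorem card_toFinset_of_mem_edgeSet {e : Sym2 V} (he : e ∈ G.edgeSet) : #e.toFinset = 2 :=
  Sym2.card_toFinset_of_not_isDiag e (G.not_isDiag_of_mem_edgeSet he)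

theorem mem_cliqueEdgePairs_of_transGraph_adj [Fintype V] [DecidableRel G.Adj]
    {a b : G.edgeSet} (h : (G.transGraph G.edgeSet).Adj a b) :
    (a.1.toFinset, b.1.toFinset) ∈ G.cliqueEdgePairs := by
  have ha := card_toFinset_of_mem_edgeSet a.2
  have hb := card_toFinset_of_mem_edgeSet b.2
  have hab : a.1.toFinset ≠ b.1.toFinset := fun hab =>
    h.1 (Subtype.ext (Sym2.toFinset_injective hab))
  have hclique := isClique_toFinset_union_of_transGraph_adj h
  unfold cliqueEdgePairs
  rcases card_union_eq_three_or_eq_sdiff_of_card_eq_two ha hb hab with h3 | ⟨h4, hsdiff⟩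
  · refine mem_union_left _ (mem_biUnion.mpr ⟨_, mem_filter.mpr ⟨mem_univ _, ⟨hclique, h3⟩⟩, ?_⟩)
    simp [mem_offDiag, mem_powersetCard, ha, hb, hab]
  · refine mem_union_right _ (mem_biUnion.mpr ⟨_, mem_filter.mpr ⟨mem_univ _, ⟨hclique, h4⟩⟩, ?_⟩)
    exact mem_image.mpr ⟨_, mem_powersetCard.mpr ⟨subset_union_left, ha⟩, by rw [← hsdiff]⟩

theorem card_dart_transGraph_le [Fintype V] [DecidableRel G.Adj] [Fintype G.edgeSet]
    [DecidableRel (G.transGraph G.edgeSet).Adj] :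
    Fintype.card (G.transGraph G.edgeSet).Dart ≤ #G.cliqueEdgePairs := by
  rw [← card_univ]
  refine card_le_card_of_injOn (fun d => (d.fst.1.toFinset, d.snd.1.toFinset))
    (fun d _ => mem_cliqueEdgePairs_of_transGraph_adj d.adj) fun d _ d' _ hdd' => ?_
  obtain ⟨hfst, hsnd⟩ := Prod.ext_iff.mp hdd'
  exact Dart.ext _ _ (Prod.ext (Subtype.ext (Sym2.toFinset_injective hfst))
    (Subtype.ext (Sym2.toFinset_injective hsnd)))

end SimpleGraph

/-- If `T` is the number of triangles of `G` and `Q` is the number of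
4-cliques of `G`, then the number of edges of the transformed graph `G_VCC` is at most
`3 * T + 3 * Q`. -/
theorem stmt_6 {V : Type*} [Fintype V] (G : SimpleGraph V) (T Q : ℕ)
    (hT : T = {t : Finset V | G.IsNClique 3 t}.ncard)
    (hQ : Q = {q : Finset V | G.IsNClique 4 q}.ncard) :
    (G.transGraph G.edgeSet).edgeSet.ncard ≤ 3 * T + 3 * Q := by
  classical
  have hT' : T = #{t | G.IsNClique 3 t} := by
    rw [hT, Set.ncard_eq_toFinset_card', Set.toFinset_ofPred]
  have hQ' : Q = #{q | G.IsNClique 4 q} := by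
    rw [hQ, Set.ncard_eq_toFinset_card', Set.toFinset_ofPred]
  have hdarts := (G.transGraph G.edgeSet).dart_card_eq_twice_card_edges
  have hbound := G.card_dart_transGraph_le.trans G.card_cliqueEdgePairs_le
  rw [← (G.transGraph G.edgeSet).coe_edgeFinset, Set.ncard_coe_finset]
  omega
end

section
/- Let G = (V,E) be a finite simple graph, let E' ⊆ E, and let G'_VCC be the partial transformed graph of G with respect to E'. If C' is a clique in G'_VCC, then the set C = ⋃_{v_{xy} ∈ C'} {x,y} of all endpoints of the edges corresponding to vertices of C' is a clique in G, and C contains (as subsets) at least |C'| edges of E', namely every edge of E' corresponding to a vertex of C'. -/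
open SimpleGraph

theorem Sym2.finite_setOf_mem {α : Type*} (z : Sym2 α) : {x | x ∈ z}.Finite := by
  classical
  exact z.toFinset.finite_toSet.subset fun _ hx => Sym2.mem_toFinset.2 hx

theorem Set.Finite.setOf_forall_mem_sym2 {α : Type*} {s : Set α} (hs : s.Finite) :
    {z : Sym2 α | ∀ x ∈ z, x ∈ s}.Finite := by
  classical
  exact hs.toFinset.sym2.finite_toSet.subset fun _ hz =>
    Finset.mem_sym2_iff.2 fun x hx => hs.mem_toFinset.2 (hz x hx)

namespace SimpleGraph

variable {V : Type*} {G : SimpleGraph V}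

theorem isClique_biUnion {ι : Type*} {s : Set ι} {f : ι → Set V}
    (h : ∀ i ∈ s, ∀ j ∈ s, G.IsClique (f i ∪ f j)) : G.IsClique (⋃ i ∈ s, f i) := by
  intro x hx y hy hxy
  simp only [Set.mem_iUnion] at hx hy
  obtain ⟨i, hi, hxi⟩ := hx
  obtain ⟨j, hj, hyj⟩ := hy
  exact h i hi j hj (Or.inl hxi) (Or.inr hyj) hxy

theorem IsClique.biUnion_of_transGraph {E' : Set (Sym2 V)} (hE' : E' ⊆ G.edgeSet)
    {C' : Set {e // e ∈ E'}} (h : (G.transGraph E').IsClique C') :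
    G.IsClique (⋃ e ∈ C', {x | x ∈ e.1}) := by
  refine isClique_biUnion fun a ha b hb => ?_
  obtain rfl | hab := eq_or_ne a b
  · rw [Set.union_self]
    exact isClique_setOf_mem_of_mem_edgeSet (hE' a.2)
  · exact (h ha hb hab).2

end SimpleGraph

/-- Holds without finiteness assumptions because `Set.ncard` of an infinite `C'` is `0`. -/
theorem ncard_le_ncard_setOf_forall_mem_biUnion {α : Type*} {E' : Set (Sym2 α)}
    (C' : Set {e // e ∈ E'}) :
    C'.ncard ≤ {e ∈ E' | ∀ x ∈ e, x ∈ ⋃ e ∈ C', {x | x ∈ e.1}}.ncard := by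
  rcases C'.finite_or_infinite with hC' | hC'
  · have hfin : (⋃ e ∈ C', {x | x ∈ e.1}).Finite :=
      hC'.biUnion fun e _ => e.1.finite_setOf_mem
    refine Set.ncard_le_ncard_of_injOn Subtype.val
      (fun e he => ⟨e.2, fun _ hx => Set.mem_biUnion he hx⟩) Subtype.val_injective.injOn ?_
    exact hfin.setOf_forall_mem_sym2.subset fun _ he => he.2
  · simp [hC'.ncard]

theorem stmt_8_general {V : Type*} (G : SimpleGraph V) (E' : Set (Sym2 V))
    (hE' : E' ⊆ G.edgeSet)
    (C' : Set {e : Sym2 V // e ∈ E'}) (h : (G.transGraph E').IsClique C')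
    (C : Set V) (hC : C = ⋃ e ∈ C', {x | x ∈ e.1}) :
    G.IsClique C ∧
    (∀ e ∈ C', ∀ x ∈ e.1, x ∈ C) ∧
    C'.ncard ≤ {e ∈ E' | ∀ x ∈ e, x ∈ C}.ncard := by
  subst hC
  exact ⟨h.biUnion_of_transGraph hE', fun e he _ hx => Set.mem_biUnion he hx,
    ncard_le_ncard_setOf_forall_mem_biUnion C'⟩

/-- If `C'` is a clique in the partial transformed graph `G'_VCC`, then the
set `C` of all endpoints of the edges corresponding to vertices of `C'` is a clique in
`G`, every edge of `E'` corresponding to a vertex of `C'` is contained in `C`, and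
`C` contains at least `|C'|` edges of `E'`. -/
theorem stmt_8 {V : Type*} [Fintype V] (G : SimpleGraph V) (E' : Set (Sym2 V))
    (hE' : E' ⊆ G.edgeSet)
    (C' : Set {e : Sym2 V // e ∈ E'}) (h : (G.transGraph E').IsClique C')
    (C : Set V) (hC : C = ⋃ e ∈ C', {x | x ∈ e.1}) :
    G.IsClique C ∧
    (∀ e ∈ C', ∀ x ∈ e.1, x ∈ C) ∧
    C'.ncard ≤ {e ∈ E' | ∀ x ∈ e, x ∈ C}.ncard :=
  stmt_8_general G E' hE' C' h C hC
end

section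
/- Let G = (V,E) be a finite simple graph and let E' ⊆ E. The minimum cardinality θ_E(G,E') of a set of cliques of G covering every edge of E' equals the minimum cardinality θ(G'_VCC) of a vertex clique cover of the partial transformed graph G'_VCC of G with respect to E'. -/
open SimpleGraph

/-
A clique `D` of `G'_VCC` yields the clique `⋃ D` of `G` (the union of the
endpoints of its edges), which covers every edge of `D`; a clique `C` of `G` yields the clique
of `G'_VCC` formed by the edges of `E'` inside `C`. These maps send covers to covers without
increasing the number of cliques, so either both minima are attained and agree, or neither
kind of finite cover exists and both numbers are `sInf ∅ = 0`.
-/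

noncomputable def minFiniteFamilyCard {α : Type*} (P : Set (Set α) → Prop) : ℕ :=
  sInf {n | ∃ 𝒞 : Set (Set α), 𝒞.Finite ∧ 𝒞.ncard = n ∧ P 𝒞}

section minFiniteFamilyCard

variable {α β : Type*} {P : Set (Set α) → Prop} {Q : Set (Set β) → Prop}

lemma minFiniteFamilyCard_eq_zero (hP : ¬∃ 𝒞, 𝒞.Finite ∧ P 𝒞) : minFiniteFamilyCard P = 0 :=
  Nat.sInf_eq_zero.mpr <| .inr <| Set.eq_empty_of_forall_notMem fun _ ⟨𝒞, h𝒞, _, hP𝒞⟩ =>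
    hP ⟨𝒞, h𝒞, hP𝒞⟩

lemma minFiniteFamilyCard_le_of_image (f : Set α → Set β)
    (hf : ∀ 𝒟, 𝒟.Finite → P 𝒟 → Q (f '' 𝒟)) (hP : ∃ 𝒟, 𝒟.Finite ∧ P 𝒟) :
    minFiniteFamilyCard Q ≤ minFiniteFamilyCard P := by
  obtain ⟨𝒟₀, h𝒟₀, hP𝒟₀⟩ := hP
  have hne : {n | ∃ 𝒟 : Set (Set α), 𝒟.Finite ∧ 𝒟.ncard = n ∧ P 𝒟}.Nonempty :=
    ⟨_, 𝒟₀, h𝒟₀, rfl, hP𝒟₀⟩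
  obtain ⟨𝒟, h𝒟, hcard, hP𝒟⟩ := Nat.sInf_mem hne
  calc minFiniteFamilyCard Q ≤ (f '' 𝒟).ncard := Nat.sInf_le ⟨_, h𝒟.image f, rfl, hf 𝒟 h𝒟 hP𝒟⟩
    _ ≤ 𝒟.ncard := Set.ncard_image_le h𝒟
    _ = minFiniteFamilyCard P := hcard

lemma minFiniteFamilyCard_eq_of_image (f : Set α → Set β) (g : Set β → Set α)
    (hf : ∀ 𝒟, 𝒟.Finite → P 𝒟 → Q (f '' 𝒟)) (hg : ∀ 𝒞, 𝒞.Finite → Q 𝒞 → P (g '' 𝒞)) :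
    minFiniteFamilyCard P = minFiniteFamilyCard Q := by
  by_cases hP : ∃ 𝒟, 𝒟.Finite ∧ P 𝒟
  · have hQ : ∃ 𝒞, 𝒞.Finite ∧ Q 𝒞 :=
      let ⟨𝒟, h𝒟, hP𝒟⟩ := hP; ⟨_, h𝒟.image f, hf 𝒟 h𝒟 hP𝒟⟩
    exact le_antisymm (minFiniteFamilyCard_le_of_image g hg hQ)
      (minFiniteFamilyCard_le_of_image f hf hP)
  · have hQ : ¬∃ 𝒞, 𝒞.Finite ∧ Q 𝒞 :=
      fun ⟨𝒞, h𝒞, hQ𝒞⟩ => hP ⟨_, h𝒞.image g, hg 𝒞 h𝒞 hQ𝒞⟩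
    rw [minFiniteFamilyCard_eq_zero hP, minFiniteFamilyCard_eq_zero hQ]

end minFiniteFamilyCard

namespace SimpleGraph

variable {V : Type*} {G : SimpleGraph V} {E' : Set (Sym2 V)}

lemma IsClique.endpoints_of_transGraph (hE' : E' ⊆ G.edgeSet)
    {D : Set {e : Sym2 V // e ∈ E'}} (hD : (G.transGraph E').IsClique D) :
    G.IsClique {x | ∃ w ∈ D, x ∈ w.1} := by
  rintro x ⟨w₁, hw₁, hx⟩ y ⟨w₂, hw₂, hy⟩ hxy
  by_cases hw : w₁ = w₂
  · subst hw
    rw [← mem_edgeSet, ← (Sym2.mem_and_mem_iff hxy).mp ⟨hx, hy⟩]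
    exact hE' w₁.2
  · exact (hD hw₁ hw₂ hw).2 (Or.inl hx) (Or.inr hy) hxy

lemma IsClique.transGraph_edgesWithin {C : Set V} (hC : G.IsClique C) :
    (G.transGraph E').IsClique {w | ∀ x ∈ w.1, x ∈ C} :=
  fun _ ha _ hb hab => ⟨hab, hC.subset (Set.union_subset ha hb)⟩

end SimpleGraph

theorem stmt_10_general {V : Type*} (G : SimpleGraph V) (E' : Set (Sym2 V))
    (hE' : E' ⊆ G.edgeSet) :
    G.eccNumberOn E' = (G.transGraph E').vccNumber := by
  refine minFiniteFamilyCard_eq_of_image (fun C => {w | ∀ x ∈ w.1, x ∈ C})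
    (fun D => {x | ∃ w ∈ D, x ∈ w.1}) ?_ ?_
  · rintro 𝒞 - ⟨hcliques, hcover⟩
    refine ⟨?_, fun w => ?_⟩
    · rintro _ ⟨C, hC, rfl⟩
      exact (hcliques C hC).transGraph_edgesWithin
    · obtain ⟨C, hC, hwC⟩ := hcover w.1 w.2
      exact ⟨_, ⟨C, hC, rfl⟩, hwC⟩
  · rintro 𝒟 - ⟨hcliques, hcover⟩
    refine ⟨?_, fun e he => ?_⟩
    · rintro _ ⟨D, hD, rfl⟩
      exact (hcliques D hD).endpoints_of_transGraph hE'
    · obtain ⟨D, hD, heD⟩ := hcover ⟨e, he⟩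
      exact ⟨_, ⟨D, hD, rfl⟩, fun x hx => ⟨⟨e, he⟩, heD, hx⟩⟩

/-- The minimum cardinality of a set of cliques of `G` covering every edge of
`E'` equals the minimum cardinality of a vertex clique cover of the partial transformed
graph `G'_VCC` of `G` with respect to `E'`. -/
theorem stmt_10 {V : Type*} [Fintype V] (G : SimpleGraph V) (E' : Set (Sym2 V))
    (hE' : E' ⊆ G.edgeSet) :
    G.eccNumberOn E' = (G.transGraph E').vccNumber :=
  stmt_10_general G E' hE'
end

section
/- Let G = (V,E) be a finite simple graph, let E' ⊆ E, and let {u,v} ∈ E' be an edge such that the common neighborhood N_{u,v} = N(u) ∩ N(v) is a clique in G (equivalently, {u,v} is contained in exactly one maximal clique of G). Let C = N_{u,v} ∪ {u,v}. Then C is a clique of G, and there exists a set of cliques of G of minimum cardinality θ_E(G,E') covering every edge of E' that contains C as a member. -/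
open SimpleGraph

/-
A minimum cover of `E'` contains some clique `D` covering the edge `uv`. Every clique through
`u` and `v` lies in `C = N(u) ∩ N(v) ∪ {u, v}`, and `C` is itself a clique when `N(u) ∩ N(v)`
is one; so exchanging `D` for `C` still covers `E'` and does not increase the size of the cover.
-/

theorem Set.ncard_insert_sdiff_singleton_le {α : Type*} {s : Set α} {a b : α} (hs : s.Finite)
    (hb : b ∈ s) : (insert a (s \ {b})).ncard ≤ s.ncard :=
  (ncard_insert_le a _).trans (ncard_sdiff_singleton_add_one hb hs).le

namespace SimpleGraph

variable {V : Type*} (G : SimpleGraph V)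

structure IsEdgeCliqueCoverOn (E' : Set (Sym2 V)) (𝒞 : Set (Set V)) : Prop where
  finite : 𝒞.Finite
  isClique : ∀ D ∈ 𝒞, G.IsClique D
  covers : ∀ e ∈ E', ∃ D ∈ 𝒞, ∀ x ∈ e, x ∈ D

variable {G} {E' : Set (Sym2 V)} {𝒞 : Set (Set V)}

theorem eccNumberOn_le_ncard (h𝒞 : G.IsEdgeCliqueCoverOn E' 𝒞) :
    G.eccNumberOn E' ≤ 𝒞.ncard :=
  Nat.sInf_le ⟨𝒞, h𝒞.finite, rfl, h𝒞.isClique, h𝒞.covers⟩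

theorem exists_isEdgeCliqueCoverOn_ncard_eq_eccNumberOn (h𝒞 : G.IsEdgeCliqueCoverOn E' 𝒞) :
    ∃ 𝒞₀, G.IsEdgeCliqueCoverOn E' 𝒞₀ ∧ 𝒞₀.ncard = G.eccNumberOn E' := by
  obtain ⟨𝒞₀, hfinite, hcard, hclique, hcovers⟩ : G.eccNumberOn E' ∈ _ :=
    Nat.sInf_mem ⟨𝒞.ncard, 𝒞, h𝒞.finite, rfl, h𝒞.isClique, h𝒞.covers⟩
  exact ⟨𝒞₀, ⟨hfinite, hclique, hcovers⟩, hcard⟩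

theorem isEdgeCliqueCoverOn_setOf_isClique [Finite V] (hE' : E' ⊆ G.edgeSet) :
    G.IsEdgeCliqueCoverOn E' {D | G.IsClique D} where
  finite := Set.toFinite _
  isClique _ hD := hD
  covers e he := by
    induction e using Sym2.ind with
    | _ x y =>
      refine ⟨{x, y}, isClique_pair.mpr fun _ ↦ hE' he, fun z hz ↦ ?_⟩
      simpa only [Sym2.mem_iff, Set.mem_insert_iff, Set.mem_singleton_iff] using hz

theorem IsEdgeCliqueCoverOn.exchange (h𝒞 : G.IsEdgeCliqueCoverOn E' 𝒞) {C D : Set V}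
    (hC : G.IsClique C) (hDC : D ⊆ C) :
    G.IsEdgeCliqueCoverOn E' (insert C (𝒞 \ {D})) where
  finite := h𝒞.finite.sdiff.insert C
  isClique := by
    rintro D' (rfl | ⟨hD', -⟩)
    exacts [hC, h𝒞.isClique D' hD']
  covers e he := by
    obtain ⟨D', hD', heD'⟩ := h𝒞.covers e he
    by_cases hD'D : D' = D
    · exact ⟨C, Set.mem_insert C _, fun x hx ↦ hDC (hD'D ▸ heD' x hx)⟩
    · exact ⟨D', Set.mem_insert_of_mem C ⟨hD', hD'D⟩, heD'⟩

theorem isClique_commonNeighbors_union_pair {u v : V} (huv : G.Adj u v)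
    (hN : G.IsClique (G.neighborSet u ∩ G.neighborSet v)) :
    G.IsClique ((G.neighborSet u ∩ G.neighborSet v) ∪ {u, v}) := by
  rw [Set.union_insert, Set.union_singleton, isClique_insert, isClique_insert]
  refine ⟨⟨hN, fun w hw _ ↦ hw.2⟩, ?_⟩
  rintro w (rfl | hw) _
  exacts [huv, hw.1]

theorem IsClique.subset_commonNeighbors_union_pair {D : Set V} (hD : G.IsClique D) {u v : V}
    (hu : u ∈ D) (hv : v ∈ D) : D ⊆ (G.neighborSet u ∩ G.neighborSet v) ∪ {u, v} := by
  intro w hw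
  by_cases hwu : w = u
  · exact Or.inr (Or.inl hwu)
  by_cases hwv : w = v
  · exact Or.inr (Or.inr hwv)
  exact Or.inl ⟨hD hu hw (Ne.symm hwu), hD hv hw (Ne.symm hwv)⟩

end SimpleGraph

theorem stmt_12_general {V : Type*} [Fintype V] (G : SimpleGraph V) (E' : Set (Sym2 V))
    (hE' : E' ⊆ G.edgeSet) (u v : V) (he : s(u, v) ∈ E')
    (hN : G.IsClique (G.neighborSet u ∩ G.neighborSet v))
    (C : Set V) (hC : C = (G.neighborSet u ∩ G.neighborSet v) ∪ {u, v}) :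
    G.IsClique C ∧
    ∃ 𝒞 : Set (Set V), 𝒞.Finite ∧ (∀ D ∈ 𝒞, G.IsClique D) ∧
      (∀ e ∈ E', ∃ D ∈ 𝒞, ∀ x ∈ e, x ∈ D) ∧
      𝒞.ncard = G.eccNumberOn E' ∧ C ∈ 𝒞 := by
  have hC_clique : G.IsClique C := hC ▸ isClique_commonNeighbors_union_pair (hE' he) hN
  obtain ⟨𝒞₀, h𝒞₀, h𝒞₀_card⟩ :=
    exists_isEdgeCliqueCoverOn_ncard_eq_eccNumberOn (isEdgeCliqueCoverOn_setOf_isClique hE')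
  obtain ⟨D, hD, huvD⟩ := h𝒞₀.covers s(u, v) he
  have hDC : D ⊆ C := hC ▸ (h𝒞₀.isClique D hD).subset_commonNeighbors_union_pair
    (huvD u (Sym2.mem_mk_left u v)) (huvD v (Sym2.mem_mk_right u v))
  have h𝒞 := h𝒞₀.exchange hC_clique hDC
  have h𝒞_card : (insert C (𝒞₀ \ {D})).ncard = G.eccNumberOn E' :=
    le_antisymm (h𝒞₀_card ▸ Set.ncard_insert_sdiff_singleton_le h𝒞₀.finite hD)
      (eccNumberOn_le_ncard h𝒞)
  exact ⟨hC_clique, _, h𝒞.finite, h𝒞.isClique, h𝒞.covers, h𝒞_card, Set.mem_insert C _⟩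

/-- If `{u,v} ∈ E'` is an edge whose common neighborhood
`N(u) ∩ N(v)` is a clique in `G`, then `C = (N(u) ∩ N(v)) ∪ {u,v}` is a clique of
`G` and there is a minimum-cardinality set of cliques of `G` covering every edge of
`E'` that contains `C` as a member. -/
theorem stmt_12 {V : Type*} [Fintype V] (G : SimpleGraph V) (E' : Set (Sym2 V))
    (hE' : E' ⊆ G.edgeSet) (u v : V) (huv : G.Adj u v) (he : s(u, v) ∈ E')
    (hN : G.IsClique (G.neighborSet u ∩ G.neighborSet v))
    (C : Set V) (hC : C = (G.neighborSet u ∩ G.neighborSet v) ∪ {u, v}) :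
    G.IsClique C ∧
    ∃ 𝒞 : Set (Set V), 𝒞.Finite ∧ (∀ D ∈ 𝒞, G.IsClique D) ∧
      (∀ e ∈ E', ∃ D ∈ 𝒞, ∀ x ∈ e, x ∈ D) ∧
      𝒞.ncard = G.eccNumberOn E' ∧ C ∈ 𝒞 :=
  stmt_12_general G E' hE' u v he hN C hC
end

section
/- Let G = (V,E) be a finite simple graph, let E' ⊆ E, let G'_VCC be the partial transformed graph of G with respect to E', and let {u,w} ∈ E'. If the common neighborhood N_{u,w} = N(u) ∩ N(w) is a clique in G, then the vertex v_{uw} of G'_VCC is simplicial in G'_VCC, i.e., the closed neighborhood of v_{uw} in G'_VCC is a clique of G'_VCC. -/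
/-! The endpoints of every edge in the closed neighbourhood of `v_uw` lie in
`{u, w} ∪ (N(u) ∩ N(w))`, and this set is a clique: `u` and `w` are adjacent as soon as `v_uw`
has a neighbour at all, and `N(u) ∩ N(w)` is a clique by hypothesis. -/

open SimpleGraph

namespace SimpleGraph

variable {V : Type*} {G : SimpleGraph V} {u w : V} {A B : Set V}

lemma isClique_insert_insert_commonNeighbors (hN : G.IsClique (G.commonNeighbors u w))
    (huw : u ≠ w → G.Adj u w) : G.IsClique (insert u (insert w (G.commonNeighbors u w))) :=
  isClique_insert.2 ⟨isClique_insert.2 ⟨hN, fun _ hx _ => hx.2⟩,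
    by rintro x (rfl | hx) hux; exacts [huw hux, hx.1]⟩

lemma insert_insert_subset_commonNeighbors_of_isClique (hA : G.IsClique (insert u (insert w A))) :
    insert u (insert w A) ⊆ insert u (insert w (G.commonNeighbors u w)) := by
  rintro x (rfl | rfl | hx)
  · exact Set.mem_insert _ _
  · exact Set.mem_insert_of_mem _ (Set.mem_insert _ _)
  by_cases hxu : x = u
  · exact hxu ▸ Set.mem_insert _ _
  by_cases hxw : x = w
  · exact hxw ▸ Set.mem_insert_of_mem _ (Set.mem_insert _ _)
  refine Set.mem_insert_of_mem _ (Set.mem_insert_of_mem _ ⟨?_, ?_⟩)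
  · exact hA (by simp) (by simp [hx]) (Ne.symm hxu)
  · exact hA (by simp) (by simp [hx]) (Ne.symm hxw)

lemma isClique_insert_insert_union (hN : G.IsClique (G.commonNeighbors u w))
    (hA : G.IsClique (insert u (insert w A))) (hB : G.IsClique (insert u (insert w B))) :
    G.IsClique (insert u (insert w (A ∪ B))) := by
  have huw : u ≠ w → G.Adj u w := hA (by simp) (by simp)
  refine (isClique_insert_insert_commonNeighbors hN huw).subset ?_
  rintro x (rfl | rfl | hx | hx)
  · exact Set.mem_insert _ _
  · exact Set.mem_insert_of_mem _ (Set.mem_insert _ _)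
  · exact insert_insert_subset_commonNeighbors_of_isClique hA (by simp [hx])
  · exact insert_insert_subset_commonNeighbors_of_isClique hB (by simp [hx])

lemma transGraph_adj {E' : Set (Sym2 V)} {a b : {e : Sym2 V // e ∈ E'}} :
    (G.transGraph E').Adj a b ↔ a ≠ b ∧ G.IsClique ({x | x ∈ a.1} ∪ {x | x ∈ b.1}) :=
  Iff.rfl

end SimpleGraph

lemma Sym2.setOf_mem_mk {V : Type*} (u w : V) : {x | x ∈ s(u, w)} = ({u, w} : Set V) := by
  ext; simp

theorem stmt_14_general {V : Type*} (G : SimpleGraph V) (E' : Set (Sym2 V))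
    (u w : V) (he : s(u, w) ∈ E')
    (hN : G.IsClique (G.neighborSet u ∩ G.neighborSet w)) :
    (G.transGraph E').IsClique
      (insert (⟨s(u, w), he⟩ : {e : Sym2 V // e ∈ E'})
        ((G.transGraph E').neighborSet ⟨s(u, w), he⟩)) := by
  have clique_of_adj : ∀ a, (G.transGraph E').Adj ⟨s(u, w), he⟩ a →
      G.IsClique (insert u (insert w {x | x ∈ a.1})) := fun a h => by
    simpa only [Sym2.setOf_mem_mk, Set.insert_union, Set.singleton_union] using h.2
  rintro a (rfl | ha) b (rfl | hb) hab
  · exact absurd rfl hab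
  · exact hb
  · exact ha.symm
  · refine transGraph_adj.2 ⟨hab, (isClique_insert_insert_union hN (clique_of_adj a ha)
      (clique_of_adj b hb)).subset ?_⟩
    exact (Set.subset_insert _ _).trans (Set.subset_insert _ _)

/-- If `{u,w} ∈ E'` and the common neighborhood `N(u) ∩ N(w)` is a clique
in `G`, then the vertex `v_uw` of the partial transformed graph `G'_VCC` is simplicial
in `G'_VCC`, i.e., its closed neighborhood in `G'_VCC` is a clique of `G'_VCC`. -/
theorem stmt_14 {V : Type*} [Fintype V] (G : SimpleGraph V) (E' : Set (Sym2 V))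
    (hE' : E' ⊆ G.edgeSet) (u w : V) (he : s(u, w) ∈ E')
    (hN : G.IsClique (G.neighborSet u ∩ G.neighborSet w)) :
    (G.transGraph E').IsClique
      (insert (⟨s(u, w), he⟩ : {e : Sym2 V // e ∈ E'})
        ((G.transGraph E').neighborSet ⟨s(u, w), he⟩)) :=
  stmt_14_general G E' u w he hN
end

section
/- Let G = (V,E) be a finite simple graph and let (H, I) be a head and crown of G: I is a nonempty independent set, H = N(I), H ∩ I = ∅, and there exists a matching in G between H and I of size |H|. Then θ(G) = |I| + θ(G[V ∖ (H ∪ I)]). -/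
open SimpleGraph

namespace SimpleGraph

variable {W : Type*} (G : SimpleGraph W)

theorem vccNumber_le_ncard {𝒞 : Set (Set W)} (hfin : 𝒞.Finite)
    (hclique : ∀ C ∈ 𝒞, G.IsClique C) (hcover : ∀ w, ∃ C ∈ 𝒞, w ∈ C) :
    G.vccNumber ≤ 𝒞.ncard :=
  Nat.sInf_le ⟨𝒞, hfin, rfl, hclique, hcover⟩

theorem exists_vcc_ncard_eq_vccNumber [Finite W] :
    ∃ 𝒞 : Set (Set W), 𝒞.Finite ∧ 𝒞.ncard = G.vccNumber ∧
      (∀ C ∈ 𝒞, G.IsClique C) ∧ ∀ w, ∃ C ∈ 𝒞, w ∈ C := by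
  have hsingletons : ∀ C ∈ Set.range ({·} : W → Set W), G.IsClique C := by
    rintro _ ⟨w, rfl⟩
    exact Set.pairwise_singleton w G.Adj
  exact Nat.sInf_mem (s := {n | ∃ 𝒞 : Set (Set W), 𝒞.Finite ∧ 𝒞.ncard = n ∧
    (∀ C ∈ 𝒞, G.IsClique C) ∧ ∀ w, ∃ C ∈ 𝒞, w ∈ C})
    ⟨_, _, Set.toFinite _, rfl, hsingletons, fun w => ⟨{w}, ⟨w, rfl⟩, rfl⟩⟩

theorem vccNumber_induce_le_ncard {T : Set W} {𝒞 : Set (Set W)} (hfin : 𝒞.Finite)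
    (hclique : ∀ C ∈ 𝒞, G.IsClique C) (hcover : ∀ t ∈ T, ∃ C ∈ 𝒞, t ∈ C) :
    (G.induce T).vccNumber ≤ 𝒞.ncard := by
  calc (G.induce T).vccNumber ≤ ((Subtype.val ⁻¹' ·) '' 𝒞 : Set (Set T)).ncard := by
        refine vccNumber_le_ncard _ (hfin.image _) ?_ fun t => ?_
        · rintro _ ⟨C, hC, rfl⟩ a ha b hb hab
          exact hclique C hC ha hb (Subtype.coe_injective.ne hab)
        · obtain ⟨C, hC, htC⟩ := hcover t t.2
          exact ⟨_, ⟨C, hC, rfl⟩, htC⟩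
    _ ≤ 𝒞.ncard := Set.ncard_image_le hfin

theorem vccNumber_le_ncard_add_vccNumber_induce_compl [Finite W] {S : Set W}
    {𝒜 : Set (Set W)} (hfin : 𝒜.Finite) (hclique : ∀ A ∈ 𝒜, G.IsClique A)
    (hcover : ∀ s ∈ S, ∃ A ∈ 𝒜, s ∈ A) :
    G.vccNumber ≤ 𝒜.ncard + (G.induce Sᶜ).vccNumber := by
  obtain ⟨𝒞, hfin', hcard, hclique', hcover'⟩ := (G.induce Sᶜ).exists_vcc_ncard_eq_vccNumber
  let 𝒟 : Set (Set W) := 𝒜 ∪ (Subtype.val '' ·) '' 𝒞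
  have h𝒟 : G.vccNumber ≤ 𝒟.ncard := by
    refine G.vccNumber_le_ncard (hfin.union (hfin'.image _)) ?_ fun w => ?_
    · rintro _ (hA | ⟨C, hC, rfl⟩)
      · exact hclique _ hA
      · rintro _ ⟨a, ha, rfl⟩ _ ⟨b, hb, rfl⟩ hab
        exact hclique' C hC ha hb (ne_of_apply_ne _ hab)
    · by_cases hw : w ∈ S
      · obtain ⟨A, hA, hwA⟩ := hcover w hw
        exact ⟨A, .inl hA, hwA⟩
      · obtain ⟨C, hC, hwC⟩ := hcover' ⟨w, hw⟩
        exact ⟨_, .inr ⟨C, hC, rfl⟩, ⟨w, hw⟩, hwC, rfl⟩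
  calc G.vccNumber ≤ 𝒟.ncard := h𝒟
    _ ≤ 𝒜.ncard + ((Subtype.val '' ·) '' 𝒞).ncard := Set.ncard_union_le _ _
    _ ≤ 𝒜.ncard + 𝒞.ncard := by gcongr; exact Set.ncard_image_le hfin'
    _ = 𝒜.ncard + (G.induce Sᶜ).vccNumber := by rw [hcard]

variable {G}

theorem IsIndepSet.injOn_of_isClique {I : Set W} (hI : G.IsIndepSet I) {𝒞 : Set (Set W)}
    (hclique : ∀ C ∈ 𝒞, G.IsClique C) {g : W → Set W} (hg : ∀ i ∈ I, g i ∈ 𝒞 ∧ i ∈ g i) :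
    Set.InjOn g I := by
  intro i hi j hj hij
  by_contra hne
  exact hI hi hj hne (hclique _ (hg i hi).1 (hg i hi).2 (hij ▸ (hg j hj).2) hne)

theorem ncard_le_ncard_not_disjoint_of_isIndepSet {I : Set W} (hI : G.IsIndepSet I)
    {𝒞 : Set (Set W)} (hfin : 𝒞.Finite) (hclique : ∀ C ∈ 𝒞, G.IsClique C)
    (hcover : ∀ w, ∃ C ∈ 𝒞, w ∈ C) :
    I.ncard ≤ (𝒞 \ {C | Disjoint C I}).ncard := by
  choose g hg𝒞 hg using hcover
  calc I.ncard = (g '' I).ncard :=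
        ((hI.injOn_of_isClique hclique fun i _ => ⟨hg𝒞 i, hg i⟩).ncard_image).symm
    _ ≤ (𝒞 \ {C | Disjoint C I}).ncard := by
      refine Set.ncard_le_ncard ?_ hfin.sdiff
      rintro _ ⟨i, hi, rfl⟩
      exact ⟨hg𝒞 i, Set.not_disjoint_iff.mpr ⟨i, hg i, hi⟩⟩

theorem ncard_add_vccNumber_induce_le [Finite W] {I T : Set W} (hI : G.IsIndepSet I)
    (hTI : Disjoint T I) (hT : ∀ t ∈ T, ∀ i ∈ I, ¬G.Adj t i) :
    I.ncard + (G.induce T).vccNumber ≤ G.vccNumber := by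
  obtain ⟨𝒞, hfin, hcard, hclique, hcover⟩ := G.exists_vcc_ncard_eq_vccNumber
  have hcoverT : ∀ t ∈ T, ∃ C ∈ 𝒞 ∩ {C | Disjoint C I}, t ∈ C := by
    intro t ht
    obtain ⟨C, hC, htC⟩ := hcover t
    refine ⟨C, ⟨hC, Set.disjoint_left.mpr fun i hiC hiI => ?_⟩, htC⟩
    exact hT t ht i hiI (hclique C hC htC hiC (hTI.ne_of_mem ht hiI))
  calc I.ncard + (G.induce T).vccNumber
      ≤ (𝒞 \ {C | Disjoint C I}).ncard + (𝒞 ∩ {C | Disjoint C I}).ncard :=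
        add_le_add (ncard_le_ncard_not_disjoint_of_isIndepSet hI hfin hclique hcover)
          (G.vccNumber_induce_le_ncard (hfin.inter_of_left _) (fun C hC => hclique C hC.1) hcoverT)
    _ = G.vccNumber := by rw [add_comm, Set.ncard_inter_add_ncard_sdiff_eq_ncard _ _ hfin, hcard]

theorem isClique_insert_fiber {H : Set W} {f : W → W} (hinj : Set.InjOn f H)
    (hadj : ∀ h ∈ H, G.Adj h (f h)) (i : W) : G.IsClique (insert i (H ∩ f ⁻¹' {i})) := by
  have hfiber : (H ∩ f ⁻¹' {i}).Subsingleton := fun a ha b hb =>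
    hinj ha.1 hb.1 (ha.2.trans hb.2.symm)
  refine (IsClique.of_subsingleton hfiber).insert fun h hh _ => ?_
  exact hh.2 ▸ (hadj h hh.1).symm

theorem vccNumber_le_ncard_add_of_matching [Finite W] {H I : Set W} {f : W → W}
    (hinj : Set.InjOn f H) (hf : ∀ h ∈ H, f h ∈ I ∧ G.Adj h (f h)) :
    G.vccNumber ≤ I.ncard + (G.induce (H ∪ I)ᶜ).vccNumber := by
  let star (i : W) : Set W := insert i (H ∩ f ⁻¹' {i})
  have hcover : ∀ v ∈ H ∪ I, ∃ A ∈ star '' I, v ∈ A := by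
    rintro v (hv | hv)
    · exact ⟨_, ⟨f v, (hf v hv).1, rfl⟩, .inr ⟨hv, rfl⟩⟩
    · exact ⟨_, ⟨v, hv, rfl⟩, .inl rfl⟩
  calc G.vccNumber ≤ (star '' I).ncard + (G.induce (H ∪ I)ᶜ).vccNumber := by
        refine G.vccNumber_le_ncard_add_vccNumber_induce_compl (I.toFinite.image _) ?_ hcover
        rintro _ ⟨i, -, rfl⟩
        exact isClique_insert_fiber hinj (fun h hh => (hf h hh).2) i
    _ ≤ I.ncard + (G.induce (H ∪ I)ᶜ).vccNumber := by
        gcongr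
        exact Set.ncard_image_le I.toFinite

end SimpleGraph

theorem stmt_16_general {V : Type*} [Fintype V] (G : SimpleGraph V) (H I : Set V)
    (hind : I.Pairwise fun a b => ¬ G.Adj a b)
    (hH : H = (⋃ a ∈ I, G.neighborSet a) \ I)
    (hmatch : ∃ f : V → V, Set.InjOn f H ∧ ∀ h ∈ H, f h ∈ I ∧ G.Adj h (f h)) :
    G.vccNumber = I.ncard + (G.induce (H ∪ I)ᶜ).vccNumber := by
  obtain ⟨f, hinj, hf⟩ := hmatch
  refine le_antisymm (vccNumber_le_ncard_add_of_matching hinj hf)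
    (ncard_add_vccNumber_induce_le hind ?_ ?_)
  · exact Set.disjoint_left.mpr fun t ht htI => ht (.inr htI)
  · intro t ht i hi hti
    exact ht (.inl (hH ▸ ⟨Set.mem_biUnion hi hti.symm, fun htI => ht (.inr htI)⟩))

/-- Crown reduction. If `I` is a nonempty independent set, `H = N(I)`,
`H ∩ I = ∅`, and there is a matching in `G` between `H` and `I` of size `|H|`,
then `θ(G) = |I| + θ(G[V ∖ (H ∪ I)])`. -/
theorem stmt_16 {V : Type*} [Fintype V] (G : SimpleGraph V) (H I : Set V)
    (hne : I.Nonempty)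
    (hind : I.Pairwise fun a b => ¬ G.Adj a b)
    (hH : H = (⋃ a ∈ I, G.neighborSet a) \ I)
    (hHI : H ∩ I = ∅)
    (hmatch : ∃ f : V → V, Set.InjOn f H ∧ ∀ h ∈ H, f h ∈ I ∧ G.Adj h (f h)) :
    G.vccNumber = I.ncard + (G.induce (H ∪ I)ᶜ).vccNumber :=
  stmt_16_general G H I hind hH hmatch
end
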